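/- Let S ⊆ [1..U] with |S| = n, and partition the sorted elements x₁ < x₂ < … < x_n of S into ⌈n/b⌉ consecutive blocks of size b (last block possibly smaller). For each block let y_i be the longest common binary prefix (from the most significant bit, with all elements written as ⌈log₂ U⌉-bit strings) of the elements in the block. Then y_i equals the longest common prefix of the first and last elements of the block, and the y_i are pairwise distinct. -/

import Mathlib

/-- Longest common prefix of two lists. -/
def lcpList {α : Type*} [DecidableEq α] : List α → List α → List α
  | a :: as, b :: bs => if a = b then a :: lcpList as bs else []
  | _, _ => []

/-! Over `Bool`, if `u < v` have equal length then `u` continues their common prefix `y` with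
`false` and `v` with `true`. If two consecutive blocks had the same prefix `y`, the last element of
the earlier block would thus be `y ++ true :: _` and the first element of the later one
`y ++ false :: _`, contradicting the order; unless one of the blocks is a singleton, in which case
`y` is a whole word and those two elements, both extending `y` and of the same length, coincide.
That `y` is a prefix of the whole block is the fact that everything lexicographically between `u`
and `w` shares their common prefix. -/

section Prefix

variable {α : Type*} [DecidableEq α]

@[simp]
theorem lcpList_nil_left (l : List α) : lcpList [] l = [] := by
  cases l <;> rfl

@[simp]
theorem lcpList_nil_right (l : List α) : lcpList l [] = [] := by
  cases l <;> rfl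

theorem lcpList_cons_cons (a b : α) (l m : List α) :
    lcpList (a :: l) (b :: m) = if a = b then a :: lcpList l m else [] :=
  rfl

@[simp]
theorem lcpList_cons_self (a : α) (l m : List α) :
    lcpList (a :: l) (a :: m) = a :: lcpList l m :=
  if_pos rfl

@[simp]
theorem lcpList_self : ∀ l : List α, lcpList l l = l
  | [] => rfl
  | a :: l => by rw [lcpList_cons_self, lcpList_self l]

theorem prefix_lcpList_iff {p : List α} :
    ∀ {l m : List α}, p <+: lcpList l m ↔ p <+: l ∧ p <+: m
  | [], m => by cases p <;> simp
  | a :: l, [] => by cases p <;> simp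
  | a :: l, b :: m => by
    rcases p with _ | ⟨c, p⟩
    · simp
    · by_cases hab : a = b
      · subst hab
        simp only [lcpList_cons_self, List.cons_prefix_cons, prefix_lcpList_iff]
        tauto
      · simp only [lcpList_cons_cons, if_neg hab, List.prefix_nil, List.cons_prefix_cons]
        grind

theorem lcpList_prefix_left (l m : List α) : lcpList l m <+: l :=
  (prefix_lcpList_iff.mp List.prefix_rfl).1

theorem lcpList_prefix_right (l m : List α) : lcpList l m <+: m :=
  (prefix_lcpList_iff.mp List.prefix_rfl).2

end Prefix

section Order

variable {α : Type*}

theorem List.append_lt_append_left_iff [Preorder α] {s t : List α} :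
    ∀ {l : List α}, l ++ s < l ++ t ↔ s < t
  | [] => Iff.rfl
  | a :: l => by
    rw [List.cons_append, List.cons_append, List.cons_lt_cons_iff, append_lt_append_left_iff]
    simp

variable [DecidableEq α]

theorem lcpList_prefix_of_lt_of_lt [Preorder α] {u v w : List α} (huv : u < v) (hvw : v < w) :
    lcpList u w <+: v := by
  induction u generalizing v w with
  | nil => simp
  | cons a u ih =>
    rcases v with _ | ⟨b, v⟩
    · exact absurd huv (List.not_lt_nil _)
    rcases w with _ | ⟨c, w⟩
    · simp
    by_cases hac : a = c
    · subst c
      rcases List.cons_lt_cons_iff.mp huv with hab | ⟨rfl, htail⟩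
      · rcases List.cons_lt_cons_iff.mp hvw with hba | ⟨rfl, -⟩
        · exact absurd (hab.trans hba) (lt_irrefl _)
        · exact absurd hab (lt_irrefl _)
      · have hvw : v < w := by simpa using hvw
        simpa using ih htail hvw
    · simp [lcpList_cons_cons, hac]

theorem lcpList_prefix_of_le_of_le [LinearOrder α] {u v w : List α} (huv : u ≤ v) (hvw : v ≤ w) :
    lcpList u w <+: v := by
  rcases huv.lt_or_eq with huv | rfl
  · rcases hvw.lt_or_eq with hvw | rfl
    · exact lcpList_prefix_of_lt_of_lt huv hvw
    · exact lcpList_prefix_right u v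
  · exact lcpList_prefix_left u w

theorem exists_eq_lcpList_append_of_lt [Preorder α] {u v : List α} (huv : u < v)
    (hlen : u.length = v.length) :
    ∃ a b s t, a < b ∧ u = lcpList u v ++ a :: s ∧ v = lcpList u v ++ b :: t := by
  induction u generalizing v with
  | nil => cases v <;> simp_all
  | cons a u ih =>
    rcases v with _ | ⟨b, v⟩
    · exact absurd huv (List.not_lt_nil _)
    rcases List.cons_lt_cons_iff.mp huv with hab | ⟨rfl, htail⟩
    · simp only [lcpList_cons_cons, if_neg hab.ne, List.nil_append]
      exact ⟨a, b, u, v, hab, rfl, rfl⟩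
    · obtain ⟨c, d, s, t, hcd, hu, hv⟩ := ih htail (by simpa using hlen)
      simp only [lcpList_cons_self, List.cons_append, List.cons.injEq, true_and]
      exact ⟨c, d, s, t, hcd, hu, hv⟩

end Order

theorem eq_or_exists_lcpList_append_false_true {u v : List Bool} (huv : u ≤ v)
    (hlen : u.length = v.length) :
    u = v ∨ ∃ s t, u = lcpList u v ++ false :: s ∧ v = lcpList u v ++ true :: t := by
  rcases huv.lt_or_eq with huv | rfl
  · obtain ⟨a, b, s, t, hab, hu, hv⟩ := exists_eq_lcpList_append_of_lt huv hlen
    obtain ⟨rfl, rfl⟩ := Bool.lt_iff.mp hab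
    exact Or.inr ⟨s, t, hu, hv⟩
  · exact Or.inl rfl

theorem lcpList_ne_lcpList_of_le_of_lt_of_le {u₁ v₁ u₂ v₂ : List Bool} (h₁ : u₁ ≤ v₁)
    (h : v₁ < u₂) (h₂ : u₂ ≤ v₂) (hl₁ : u₁.length = v₁.length) (hl : v₁.length = u₂.length)
    (hl₂ : u₂.length = v₂.length) :
    lcpList u₁ v₁ ≠ lcpList u₂ v₂ := by
  intro hy
  have hv₁ : lcpList u₁ v₁ <+: v₁ := lcpList_prefix_right u₁ v₁
  have hu₂ : lcpList u₁ v₁ <+: u₂ := hy ▸ lcpList_prefix_left u₂ v₂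
  rcases eq_or_exists_lcpList_append_false_true h₁ hl₁ with rfl | ⟨-, t, -, ht⟩
  · rw [lcpList_self] at hu₂
    exact h.ne (hu₂.eq_of_length hl)
  rcases eq_or_exists_lcpList_append_false_true h₂ hl₂ with rfl | ⟨s, -, hs, -⟩
  · rw [hy, lcpList_self] at hv₁
    exact h.ne (hv₁.eq_of_length hl.symm).symm
  have : lcpList u₁ v₁ ++ true :: t < lcpList u₁ v₁ ++ false :: s := by
    rw [← ht, hy, ← hs]
    exact h
  simp [List.append_lt_append_left_iff, List.cons_lt_cons_iff, Bool.lt_iff] at this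

theorem pos_and_mul_lt_of_lt_add_sub_one_div {n b i : ℕ} (hi : i < (n + b - 1) / b) :
    0 < b ∧ i * b < n := by
  rw [← Nat.ceilDiv_eq_add_pred_div] at hi
  have hb : 0 < b := Nat.pos_of_ne_zero (by rintro rfl; simp at hi)
  refine ⟨hb, lt_of_not_ge fun h => hi.not_ge ((ceilDiv_le_iff_le_mul hb).mpr ?_)⟩
  rwa [mul_comm]

theorem block_lcps_distinct_general (w n b : ℕ)
    (x : ℕ → List Bool)
    (hlen : ∀ j < n, (x j).length = w)
    (hmono : ∀ j k : ℕ, j < k → k < n → x j < x k) :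
    let nb := (n + b - 1) / b
    let first : ℕ → ℕ := fun i => i * b
    let last : ℕ → ℕ := fun i => min ((i + 1) * b) n - 1
    let y : ℕ → List Bool := fun i => lcpList (x (first i)) (x (last i))
    (∀ i < nb, (∀ j, first i ≤ j → j ≤ last i → y i <+: x j) ∧
        (∀ p : List Bool, (∀ j, first i ≤ j → j ≤ last i → p <+: x j) →
          p <+: y i)) ∧
    (∀ i i', i < nb → i' < nb → i ≠ i' → y i ≠ y i') := by
  intro nb first last y
  have hsorted : ∀ j k, j ≤ k → k < n → x j ≤ x k := fun j k hjk hk =>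
    hjk.lt_or_eq.elim (fun h => (hmono j k h hk).le) (fun h => h ▸ le_rfl)
  have hlen' : ∀ j < n, ∀ k < n, (x j).length = (x k).length := fun j hj k hk =>
    (hlen j hj).trans (hlen k hk).symm
  have hblock : ∀ i < nb, first i ≤ last i ∧ last i < n := fun i hi => by
    obtain ⟨hb, hib⟩ := pos_and_mul_lt_of_lt_add_sub_one_div hi
    simp only [first, last, add_one_mul]
    omega
  have hseparated : ∀ i i', i < i' → i' < nb → last i < first i' := fun i i' hii' hi' => by
    obtain ⟨hb, -⟩ := pos_and_mul_lt_of_lt_add_sub_one_div hi'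
    have : (i + 1) * b ≤ i' * b := Nat.mul_le_mul_right b hii'
    simp only [first, last, add_one_mul] at this ⊢
    omega
  have hdistinct : ∀ i i', i < i' → i' < nb → y i ≠ y i' := fun i i' hii' hi' => by
    obtain ⟨hfl, hln⟩ := hblock i (hii'.trans hi')
    obtain ⟨hfl', hln'⟩ := hblock i' hi'
    have hsep := hseparated i i' hii' hi'
    exact lcpList_ne_lcpList_of_le_of_lt_of_le (hsorted _ _ hfl hln) (hmono _ _ hsep (by omega))
      (hsorted _ _ hfl' hln') (hlen' _ (by omega) _ hln) (hlen' _ hln _ (by omega))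
      (hlen' _ (by omega) _ hln')
  refine ⟨fun i hi => ⟨fun j hj₁ hj₂ => ?_, fun p hp => ?_⟩, fun i i' hi hi' hne => ?_⟩
  · exact lcpList_prefix_of_le_of_le (hsorted _ _ hj₁ (hj₂.trans_lt (hblock i hi).2)) (hsorted _ _ hj₂ (hblock i hi).2)
  · exact prefix_lcpList_iff.mpr ⟨hp _ le_rfl (hblock i hi).1, hp _ (hblock i hi).1 le_rfl⟩
  · rcases hne.lt_or_gt with h | h
    exacts [hdistinct i i' h hi', (hdistinct i' i h hi).symm]

/-- Let `S ⊆ [1..U]`, `|S| = n`, be given in sorted order as `w`-bit binary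
strings (MSB first, `w = ⌈log₂ U⌉`, lexicographic order = numeric order),
partitioned into `⌈n/b⌉` consecutive blocks of size `b` (last block possibly
smaller).  For each block `i`, the longest common prefix `y i` of the first
and last elements of the block is the longest common prefix of all elements
of the block, and the `y i` are pairwise distinct. -/
theorem block_lcps_distinct (w n b : ℕ) (hb : 1 ≤ b) (hn : 1 ≤ n)
    (x : ℕ → List Bool)
    (hlen : ∀ j < n, (x j).length = w)
    (hmono : ∀ j k : ℕ, j < k → k < n → x j < x k) :
    let nb := (n + b - 1) / b
    let first : ℕ → ℕ := fun i => i * b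
    let last : ℕ → ℕ := fun i => min ((i + 1) * b) n - 1
    let y : ℕ → List Bool := fun i => lcpList (x (first i)) (x (last i))
    (∀ i < nb, (∀ j, first i ≤ j → j ≤ last i → y i <+: x j) ∧
        (∀ p : List Bool, (∀ j, first i ≤ j → j ≤ last i → p <+: x j) →
          p <+: y i)) ∧
    (∀ i i', i < nb → i' < nb → i ≠ i' → y i ≠ y i') :=
  block_lcps_distinct_general w n b x hlen hmono
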